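/- arXiv:1210.0859 — 2 statements merged into one kernel-verified Lean document; each statement's English description precedes it below -/
import Mathlib

section
/- In a pair of families (𝓕, 𝓟, •, ∙) over a normed background, conditions (A) and (B) together with condition (P) imply condition (P+). (Proved by induction on t: (P+) for t = 0 is (P); the inductive step applies (P+) for t to ∂P using (A), then uses (B) to replace F by G with G • P defined and each element of F_a extended by an element of G_a.) -/
/-- A normed background `(A, X)`: a partial multiplication on `A` (given by a domain
predicate `mulDef` and a total function `mul`), a partial action of `A` on `X`
(given by `actDef` and `act`), a truncation `trunc : X → X` and a norm into a linear
order `D`, satisfying: associativity whenever both sides are defined; the action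
commutes with truncation; and the norm monotonicity/domain condition. -/
structure NormedBackground (A X D : Type*) [LinearOrder D] where
  mulDef : A → A → Prop
  mul : A → A → A
  actDef : A → X → Prop
  act : A → X → X
  trunc : X → X
  norm : X → D
  act_assoc : ∀ a b x, actDef b x → actDef a (act b x) → mulDef a b → actDef (mul a b) x →
    act a (act b x) = act (mul a b) x
  actDef_trunc : ∀ a x, actDef a x → actDef a (trunc x)
  act_trunc : ∀ a x, actDef a x → trunc (act a x) = act a (trunc x)
  norm_dom : ∀ a x y, norm x ≤ norm y → actDef a y → actDef a x
  norm_mono : ∀ a x y, norm x ≤ norm y → actDef a y → norm (act a x) ≤ norm (act a y)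

namespace NormedBackground

variable {A X D : Type*} [LinearOrder D] (NB : NormedBackground A X D)

/-- `b` extends `a`: whenever `a.x` is defined, so is `b.x` and they agree. -/
def Ext (b a : A) : Prop := ∀ x, NB.actDef a x → NB.actDef b x ∧ NB.act b x = NB.act a x

/-- The pointwise action `F . P` of a set on a set. -/
def actSet (F : Set A) (P : Set X) : Set X := {z | ∃ a ∈ F, ∃ x ∈ P, z = NB.act a x}

/-- `F . P` is defined: `a.x` is defined for all `a ∈ F`, `x ∈ P`. -/
def actSetDef (F : Set A) (P : Set X) : Prop := ∀ a ∈ F, ∀ x ∈ P, NB.actDef a x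

/-- The pointwise product `F · G` of two sets. -/
def mulSet (F G : Set A) : Set A := {c | ∃ a ∈ F, ∃ b ∈ G, c = NB.mul a b}

/-- `F · G` is defined: `a · b` is defined for all `a ∈ F`, `b ∈ G`. -/
def mulSetDef (F G : Set A) : Prop := ∀ a ∈ F, ∀ b ∈ G, NB.mulDef a b

end NormedBackground

/-- A pair of families `(𝓕, 𝓟, •, ∙)` over a normed background: families `Fam`, `Pam`
of non-empty subsets of `A`, `X` with partial operations `•` (encoded by the domain
predicate `bulDef`) and `∙` (encoded by `bullDef`) which, when defined, are given
pointwise by the action and multiplication and take values in `Pam`, `Fam`. -/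
structure PairFam {A X D : Type*} [LinearOrder D] (NB : NormedBackground A X D) where
  Fam : Set (Set A)
  Pam : Set (Set X)
  fam_nonempty : ∀ F ∈ Fam, F.Nonempty
  pam_nonempty : ∀ P ∈ Pam, P.Nonempty
  bulDef : Set A → Set X → Prop
  bullDef : Set A → Set A → Prop
  bulDef_mem : ∀ F P, bulDef F P → F ∈ Fam ∧ P ∈ Pam
  bul_pointwise : ∀ F P, bulDef F P → NB.actSetDef F P ∧ NB.actSet F P ∈ Pam
  bullDef_mem : ∀ F G, bullDef F G → F ∈ Fam ∧ G ∈ Fam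
  bull_pointwise : ∀ F G, bullDef F G → NB.mulSetDef F G ∧ NB.mulSet F G ∈ Fam

namespace PairFam

variable {A X D : Type*} [LinearOrder D] {NB : NormedBackground A X D}

/-- Condition (A): `𝓟` is closed under truncation. -/
def CondA (PF : PairFam NB) : Prop := ∀ P ∈ PF.Pam, NB.trunc '' P ∈ PF.Pam

/-- Condition (B): if `F • ∂P` is defined, then there is `G ∈ 𝓕` with `G • P` defined
and every element of `F` extended by an element of `G`. -/
def CondB (PF : PairFam NB) : Prop :=
  ∀ F P, F ∈ PF.Fam → P ∈ PF.Pam → PF.bulDef F (NB.trunc '' P) →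
    ∃ G ∈ PF.Fam, PF.bulDef G P ∧ ∀ f ∈ F, ∃ g ∈ G, NB.Ext g f

/-- Condition (*): if `F • (G • P)` is defined, then `(F ∙ G) • P` is defined. -/
def CondStar (PF : PairFam NB) : Prop :=
  ∀ F G P, PF.bulDef G P → PF.bulDef F (NB.actSet G P) →
    PF.bullDef F G ∧ PF.bulDef (NB.mulSet F G) P

/-- The pigeonhole condition (P). -/
def CondP (PF : PairFam NB) : Prop :=
  ∀ d : ℕ, 0 < d → ∀ P ∈ PF.Pam, ∀ y ∈ NB.trunc '' P,
    ∃ F ∈ PF.Fam, ∃ a : A, PF.bulDef F P ∧ NB.actDef a y ∧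
      ∀ C : X → Fin d, ∃ f ∈ F, NB.Ext f a ∧
        ∃ c : Fin d, ∀ x ∈ P, NB.trunc x = y → C (NB.act f x) = c

/-- The strengthened pigeonhole condition (P+). -/
def CondPplus (PF : PairFam NB) : Prop :=
  ∀ d : ℕ, 0 < d → ∀ t : ℕ, ∀ P ∈ PF.Pam, ∀ x ∈ NB.trunc^[t + 1] '' P,
    ∃ F ∈ PF.Fam, ∃ a : A, PF.bulDef F P ∧ NB.actDef a x ∧
      ∀ C : X → Fin d, ∃ f ∈ F, NB.Ext f a ∧
        ∃ c : Fin d, ∀ z ∈ NB.trunc^[t] '' P, NB.trunc z = x → C (NB.act f z) = c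

/-- The Ramsey condition (R). -/
def CondR (PF : PairFam NB) : Prop :=
  ∀ d : ℕ, 0 < d → ∀ P ∈ PF.Pam,
    ∃ F ∈ PF.Fam, PF.bulDef F P ∧
      ∀ C : X → Fin d, ∃ f ∈ F,
        ∃ c : Fin d, ∀ x ∈ P, C (NB.act f x) = c

end PairFam

/-! Induct on `t`. The case `t = 0` is (P). For the step, apply the hypothesis to `∂P ∈ 𝓟`
(condition (A)), using `∂^(t+1) P = ∂^t (∂P)`, to get `F • ∂P` defined, and let (B) lift `F`
to `G` with `G • P` defined. Every `f ∈ F` is defined on `∂^t (∂P)`, so an extension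
`g ∈ G` of `f` acts there exactly as `f` does and inherits its monochromatic colour. -/

namespace NormedBackground

variable {A X D : Type*} [LinearOrder D] (NB : NormedBackground A X D)

theorem Ext.trans {NB : NormedBackground A X D} {a b c : A} (hab : NB.Ext a b)
    (hbc : NB.Ext b c) : NB.Ext a c := fun x hx =>
  ⟨(hab x (hbc x hx).1).1, (hab x (hbc x hx).1).2.trans (hbc x hx).2⟩

theorem actDef_iterate_trunc {a : A} {x : X} (h : NB.actDef a x) (n : ℕ) :
    NB.actDef a (NB.trunc^[n] x) := by
  induction n with
  | zero => exact h
  | succ n ih =>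
    rw [Function.iterate_succ_apply']
    exact NB.actDef_trunc _ _ ih

theorem actSetDef_image_iterate_trunc {F : Set A} {P : Set X} (h : NB.actSetDef F P)
    (n : ℕ) : NB.actSetDef F (NB.trunc^[n] '' P) := by
  rintro f hf _ ⟨x, hx, rfl⟩
  exact NB.actDef_iterate_trunc (h f hf x hx) n

/-- `a.x` is defined and every `d`-colouring of `F_a . Q_x` admits `f ∈ F_a` with `f . Q_x`
monochromatic, where `F_a` is the set of `f ∈ F` extending `a` and `Q_x = {z ∈ Q | ∂z = x}`. -/
def PigeonholeAt (d : ℕ) (Q : Set X) (x : X) (F : Set A) (a : A) : Prop :=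
  NB.actDef a x ∧ ∀ C : X → Fin d, ∃ f ∈ F, NB.Ext f a ∧
    ∃ c : Fin d, ∀ z ∈ Q, NB.trunc z = x → C (NB.act f z) = c

theorem PigeonholeAt.of_forall_exists_ext {NB : NormedBackground A X D} {d : ℕ} {Q : Set X}
    {x : X} {F G : Set A} {a : A} (h : NB.PigeonholeAt d Q x F a) (hFQ : NB.actSetDef F Q)
    (hGF : ∀ f ∈ F, ∃ g ∈ G, NB.Ext g f) : NB.PigeonholeAt d Q x G a := by
  refine ⟨h.1, fun C => ?_⟩
  obtain ⟨f, hf, hfa, c, hc⟩ := h.2 C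
  obtain ⟨g, hg, hgf⟩ := hGF f hf
  refine ⟨g, hg, hgf.trans hfa, c, fun z hz hzx => ?_⟩
  rw [(hgf z (hFQ f hf z hz)).2]
  exact hc z hz hzx

end NormedBackground

namespace PairFam

variable {A X D : Type*} [LinearOrder D] {NB : NormedBackground A X D} (PF : PairFam NB)

theorem exists_pigeonholeAt_iterate_succ (hB : CondB PF) {d t : ℕ} {P : Set X} {x : X}
    (hP : P ∈ PF.Pam)
    (h : ∃ F ∈ PF.Fam, ∃ a : A, PF.bulDef F (NB.trunc '' P) ∧
      NB.PigeonholeAt d (NB.trunc^[t] '' (NB.trunc '' P)) x F a) :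
    ∃ G ∈ PF.Fam, ∃ a : A, PF.bulDef G P ∧ NB.PigeonholeAt d (NB.trunc^[t + 1] '' P) x G a := by
  obtain ⟨F, hF, a, hFP, hpig⟩ := h
  obtain ⟨G, hG, hGP, hGF⟩ := hB F P hF hP hFP
  refine ⟨G, hG, a, hGP, ?_⟩
  rw [Function.iterate_succ, Set.image_comp]
  exact hpig.of_forall_exists_ext
    (NB.actSetDef_image_iterate_trunc (PF.bul_pointwise F _ hFP).1 t) hGF

end PairFam

open PairFam in
/-- In a pair of families over a normed background, conditions (A) and (B) together
with the pigeonhole condition (P) imply the strengthened condition (P+). -/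
theorem condP_implies_condPplus {A X D : Type*} [LinearOrder D]
    {NB : NormedBackground A X D} (PF : PairFam NB)
    (hA : CondA PF) (hB : CondB PF) (hP : CondP PF) : CondPplus PF := by
  intro d hd t
  induction t with
  | zero =>
    simpa only [zero_add, Function.iterate_one, Function.iterate_zero, Set.image_id]
      using hP d hd
  | succ t ih =>
    intro P hPm x hx
    rw [Function.iterate_succ, Set.image_comp] at hx
    exact PF.exists_pigeonholeAt_iterate_succ hB hPm (ih _ (hA P hPm) x hx)
end

section
/- Halpern–Läuchli theorem for strong subtrees (level product version): Fix k ≥ 1 and let T^n denote the regular ordered tree of height n with branching number k. Given d > 0, t ≥ 1, and m, there exists n such that for every d-coloring of the set of t-tuples (w₁,...,w_t) of nodes of T^n all of the same height, there exists a strong sequence of embeddings g₁,...,g_t : T^m → T^n such that the set {(g₁(v₁),...,g_t(v_t)) : v₁,...,v_t ∈ T^m, ht(v_i) = ht(v_j) for all i, j} is monochromatic. -/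
noncomputable section
open scoped Classical

/-- A finite ordered tree: carrier `Fin card`, a tree partial order `le`
(any two elements have a meet, predecessors of any element are linearly
ordered), together with the induced lexicographic linear order `lex`
(a linear extension of `le` which does not interleave incomparable subtrees). -/
structure OTree where
  card : ℕ
  le : Fin card → Fin card → Prop
  le_refl : ∀ v, le v v
  le_antisymm : ∀ v w, le v w → le w v → v = w
  le_trans : ∀ u v w, le u v → le v w → le u w
  pred_linear : ∀ v u w, le u v → le w v → le u w ∨ le w u
  meet_exists : ∀ v w, ∃ u, le u v ∧ le u w ∧ ∀ z, le z v → le z w → le z u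
  lex : Fin card → Fin card → Prop
  lex_total : ∀ v w, lex v w ∨ lex w v
  lex_antisymm : ∀ v w, lex v w → lex w v → v = w
  lex_trans : ∀ u v w, lex u v → lex v w → lex u w
  le_lex : ∀ v w, le v w → lex v w
  lex_compat : ∀ v w v' w', ¬ le v w → ¬ le w v → lex v w → le v v' → le w w' → lex v' w'

namespace OTree

variable (T : OTree)

/-- The meet (infimum, largest common predecessor) of two nodes. -/
def meet (v w : Fin T.card) : Fin T.card := Classical.choose (T.meet_exists v w)

/-- A leaf is a maximal node. -/
def Leaf (v : Fin T.card) : Prop := ∀ w, T.le v w → w = v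

/-- `w` is an immediate successor of `v`. -/
def ImSucc (v w : Fin T.card) : Prop :=
  T.le v w ∧ v ≠ w ∧ ∀ u, T.le v u → T.le u w → u = v ∨ u = w

/-- The number of immediate successors of a node. -/
def imCard (v : Fin T.card) : ℕ := (Finset.univ.filter (fun w => T.ImSucc v w)).card

/-- The branching number `br(T)`: maximal number of immediate successors of a node. -/
def br : ℕ := Finset.univ.sup (fun v => T.imCard v)

/-- The height of a node: the number of its predecessors (itself included). -/
def ht (v : Fin T.card) : ℕ := (Finset.univ.filter (fun u => T.le u v)).card

/-- The height of the tree. -/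
def height : ℕ := Finset.univ.sup (fun v => T.ht v)

end OTree

/-- `f` is an embedding of ordered trees: an injective meet-morphism preserving
the lexicographic order, such that for every `v`, those immediate successors of `f v`
lying below an image of an immediate successor of `v` form a lex-initial segment
of the immediate successors of `f v`. -/
def IsEmb (S T : OTree) (f : Fin S.card → Fin T.card) : Prop :=
  Function.Injective f ∧
  (∀ v w, f (S.meet v w) = T.meet (f v) (f w)) ∧
  (∀ v w, S.lex v w → T.lex (f v) (f w)) ∧
  (∀ v w₁ w₂, T.ImSucc (f v) w₁ → T.ImSucc (f v) w₂ → T.lex w₁ w₂ →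
    (∃ v', S.ImSucc v v' ∧ T.le w₂ (f v')) → ∃ v', S.ImSucc v v' ∧ T.le w₁ (f v'))

/-- `f` maps leaves to leaves. -/
def LeafPres (S T : OTree) (f : Fin S.card → Fin T.card) : Prop :=
  ∀ v, S.Leaf v → T.Leaf (f v)

/-- `f` is strong: it maps nodes of equal height to nodes of equal height. -/
def Strong (S T : OTree) (f : Fin S.card → Fin T.card) : Prop :=
  ∀ v w, S.ht v = S.ht w → T.ht (f v) = T.ht (f w)

/-- The linear (chain) ordered tree with `s` nodes, i.e. `[s] = {1,…,s}`. -/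
def chainTree (s : ℕ) : OTree where
  card := s
  le := (· ≤ ·)
  le_refl := fun v => le_refl v
  le_antisymm := fun v w h1 h2 => le_antisymm h1 h2
  le_trans := fun u v w h1 h2 => le_trans h1 h2
  pred_linear := fun _ u w _ _ => le_total u w
  meet_exists := fun v w =>
    ⟨min v w, min_le_left v w, min_le_right v w, fun z h1 h2 => le_min h1 h2⟩
  lex := (· ≤ ·)
  lex_total := fun v w => le_total v w
  lex_antisymm := fun v w h1 h2 => le_antisymm h1 h2
  lex_trans := fun u v w h1 h2 => le_trans h1 h2
  le_lex := fun _ _ h => h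
  lex_compat := fun v w _ _ h1 h2 _ _ _ => absurd (le_total v w) (by tauto)

/-- `T` is the regular tree with branching number `k` and height `n`: every non-leaf
node has exactly `k` immediate successors and every leaf has height `n`. -/
def Regular (T : OTree) (k n : ℕ) : Prop :=
  (∀ v, ¬ T.Leaf v → T.imCard v = k) ∧ (∀ v, T.Leaf v → T.ht v = n) ∧ (T.card = 0 ↔ n = 0)

end

/-!
Code a node of a regular tree of branching `k` by the word of child indices leading to it from the
root: meets become longest common prefixes and the lexicographic order compares first differing
letters. A `t`-tuple of nodes of equal height is then a single word over `Fin t → Fin k`, so the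
colouring is a colouring of words. Applying the Hales–Jewett theorem level by level, and then
pigeonhole to the levels, yields an `m`-parameter word `P` of length `n` whose level prefixes (the
parts before the first occurrences of the variables) all have one colour. Substituting an address
of the small tree into the `i`-th coordinate of `P` sends words of length `j` to words of length
`P.lv j`, puts the `r`-th letter at position `P.lv r` and preserves prefixes; such a word map
induces a strong embedding whose meets have heights independent of `i`, and equal-height tuples of
images are read off the level prefixes of `P`.
-/

open Finset

noncomputable section

namespace Nat

variable {S : Finset ℕ}

theorem card_toFinset_mem (hf : (Set.ofPred (· ∈ S)).Finite) : #hf.toFinset = #S := by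
  simp

theorem nth_mem_finset {j : ℕ} (hj : j < #S) : Nat.nth (· ∈ S) j ∈ S :=
  Nat.nth_mem j fun hf => by rwa [card_toFinset_mem]

theorem nth_lt_nth_finset {i j : ℕ} (hij : i < j) (hj : j < #S) :
    Nat.nth (· ∈ S) i < Nat.nth (· ∈ S) j :=
  Nat.nth_lt_nth' hij fun hf => by rwa [card_toFinset_mem]

theorem count_nth_finset {j : ℕ} (hj : j < #S) : Nat.count (· ∈ S) (Nat.nth (· ∈ S) j) = j :=
  Nat.count_nth fun hf => by rwa [card_toFinset_mem]

theorem count_lt_card_finset {r : ℕ} (hr : r ∈ S) : Nat.count (· ∈ S) r < #S := by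
  simpa using Nat.count_lt_card (Set.toFinite (Set.ofPred (· ∈ S))) hr

end Nat

theorem List.prefix_or_prefix_or_diverge {α : Type*} :
    ∀ u w : List α, u <+: w ∨ w <+: u ∨
      ∃ p a b u' w', a ≠ b ∧ u = p ++ a :: u' ∧ w = p ++ b :: w'
  | [], _ => .inl nil_prefix
  | _ :: _, [] => .inr (.inl nil_prefix)
  | a :: u, b :: w => by
    by_cases hab : a = b
    · subst hab
      rcases prefix_or_prefix_or_diverge u w with h | h | ⟨p, a', b', u', w', h, rfl, rfl⟩
      · exact .inl (cons_prefix_cons.mpr ⟨rfl, h⟩)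
      · exact .inr (.inl (cons_prefix_cons.mpr ⟨rfl, h⟩))
      · exact .inr (.inr ⟨a :: p, a', b', u', w', h, rfl, rfl⟩)
    · exact .inr (.inr ⟨[], a, b, u, w, hab, rfl, rfl⟩)

namespace Combinatorics.Subspace

open scoped Classical

variable {σ : Type*} {R D : ℕ}

def firstOcc (l : Subspace (Fin R) σ (Fin D)) (e : Fin R) : Fin D :=
  (univ.filter fun q => l.idxFun q = Sum.inr e).min' <| by
    obtain ⟨q, hq⟩ := l.proper e
    exact ⟨q, by simpa using hq⟩

theorem idxFun_firstOcc (l : Subspace (Fin R) σ (Fin D)) (e : Fin R) :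
    l.idxFun (l.firstOcc e) = Sum.inr e := by
  unfold firstOcc
  exact (mem_filter.mp (min'_mem (univ.filter fun q => l.idxFun q = Sum.inr e) _)).2

theorem firstOcc_le (l : Subspace (Fin R) σ (Fin D)) {e : Fin R} {q : Fin D}
    (h : l.idxFun q = Sum.inr e) : l.firstOcc e ≤ q :=
  min'_le _ _ (mem_filter.mpr ⟨mem_univ q, h⟩)

theorem firstOcc_injective (l : Subspace (Fin R) σ (Fin D)) : Function.Injective l.firstOcc :=
  fun e e' h => Sum.inr_injective <| by rw [← l.idxFun_firstOcc, h, l.idxFun_firstOcc]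

def firstOccs (l : Subspace (Fin R) σ (Fin D)) : Finset ℕ := univ.image fun e => (l.firstOcc e : ℕ)

def rank (l : Subspace (Fin R) σ (Fin D)) (e : Fin R) : ℕ :=
  Nat.count (· ∈ l.firstOccs) (l.firstOcc e)

theorem card_firstOccs (l : Subspace (Fin R) σ (Fin D)) : #l.firstOccs = R := by
  rw [firstOccs, card_image_of_injective _ fun e e' h => l.firstOcc_injective (Fin.ext h)]
  simp

theorem firstOcc_mem_firstOccs (l : Subspace (Fin R) σ (Fin D)) (e : Fin R) :
    (l.firstOcc e : ℕ) ∈ l.firstOccs :=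
  mem_image_of_mem _ (mem_univ e)

theorem rank_lt (l : Subspace (Fin R) σ (Fin D)) (e : Fin R) : l.rank e < R :=
  (Nat.count_lt_card_finset (l.firstOcc_mem_firstOccs e)).trans_eq l.card_firstOccs

theorem nth_rank (l : Subspace (Fin R) σ (Fin D)) (e : Fin R) :
    Nat.nth (· ∈ l.firstOccs) (l.rank e) = l.firstOcc e :=
  Nat.nth_count (l.firstOcc_mem_firstOccs e)

theorem exists_nth_eq_firstOcc (l : Subspace (Fin R) σ (Fin D)) {r : ℕ} (hr : r < R) :
    ∃ e, Nat.nth (· ∈ l.firstOccs) r = l.firstOcc e ∧ l.rank e = r := by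
  have hr' : r < #l.firstOccs := hr.trans_eq l.card_firstOccs.symm
  obtain ⟨e, -, he⟩ := mem_image.mp (show _ ∈ univ.image _ from Nat.nth_mem_finset hr')
  refine ⟨e, he.symm, ?_⟩
  rw [rank, he]
  exact Nat.count_nth_finset hr'

end Combinatorics.Subspace

/-- The word maps that induce strong embeddings of regular trees (`isEmb_descend_addr`). -/
structure IsWordEmb {α : Type*} (m : ℕ) (ℓ : ℕ → ℕ) (φ : List α → List α) : Prop where
  strictMonoOn : StrictMonoOn ℓ (Set.Iio m)
  length_eq : ∀ w, (φ w).length = ℓ w.length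
  getElem?_lv : ∀ w, w.length < m → ∀ r < w.length, (φ w)[ℓ r]? = w[r]?
  prefix_of_prefix : ∀ {u w}, u <+: w → w.length < m → φ u <+: φ w

namespace IsWordEmb

variable {α : Type*} {m : ℕ} {ℓ : ℕ → ℕ} {φ : List α → List α} (hφ : IsWordEmb m ℓ φ)
include hφ

theorem length_lt_length {u w : List α} (h : u.length < w.length) (hw : w.length < m) :
    (φ u).length < (φ w).length := by
  rw [hφ.length_eq, hφ.length_eq]
  exact hφ.strictMonoOn (h.trans hw) hw h

theorem exists_eq_append_cons {p u : List α} {a : α} (hu : (p ++ a :: u).length < m) :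
    ∃ s, φ (p ++ a :: u) = φ p ++ a :: s := by
  obtain ⟨t, ht⟩ := hφ.prefix_of_prefix (List.prefix_append p (a :: u)) hu
  have hlen := hφ.length_lt_length (u := p) (by simp) hu
  have hget := hφ.getElem?_lv _ hu p.length (by simp)
  rw [← hφ.length_eq p, ← ht] at hget
  rcases t with _ | ⟨a', s⟩
  · simp [← ht] at hlen
  · simp only [List.getElem?_append_right le_rfl, Nat.sub_self, List.getElem?_cons_zero,
      Option.some.injEq] at hget
    exact ⟨s, by rw [← ht, hget]⟩

theorem append_singleton_prefix {w : List α} {a : α} (hw : (w ++ [a]).length < m) :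
    φ w ++ [a] <+: φ (w ++ [a]) := by
  obtain ⟨s, hs⟩ := hφ.exists_eq_append_cons (u := []) hw
  rw [hs]
  exact (List.prefix_append_right_inj _).mpr (List.prefix_append [a] s)

theorem injOn {u w : List α} (hu : u.length < m) (hw : w.length < m) (h : φ u = φ w) : u = w := by
  have hlen : u.length = w.length :=
    hφ.strictMonoOn.injOn hu hw (by rw [← hφ.length_eq, ← hφ.length_eq, h])
  refine List.ext_getElem? fun r => ?_
  by_cases hr : r < u.length
  · rw [← hφ.getElem?_lv u hu r hr, ← hφ.getElem?_lv w hw r (hlen ▸ hr), h]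
  · rw [List.getElem?_eq_none (by omega), List.getElem?_eq_none (by omega)]

end IsWordEmb

/-- An `m`-parameter word of length `N` over `σ`: position `q` holds the constant `a` if
`idx q = .inl a` and the variable `r` if `idx q = .inr r`, and `lv r` is the first position of the
variable `r`. Positions `≥ N` are never read. -/
structure ParamWord (σ : Type*) (m N : ℕ) where
  idx : ℕ → σ ⊕ ℕ
  lv : ℕ → ℕ
  lv_lt : ∀ r < m, lv r < N
  lv_strictMonoOn : StrictMonoOn lv (Set.Iio m)
  idx_lv : ∀ r < m, idx (lv r) = .inr r
  lv_le_of_idx : ∀ {q r}, idx q = .inr r → r < m ∧ lv r ≤ q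

namespace ParamWord

variable {σ τ : Type*} {m N : ℕ}

def eval (P : ParamWord σ m N) (b : ℕ → σ) (q : ℕ) : σ := (P.idx q).elim id b

def word (P : ParamWord σ m N) (L : ℕ) (b : ℕ → σ) : List σ :=
  List.ofFn fun q : Fin L => P.eval b q

/-- The prefix in front of the first occurrence of the variable `j`, evaluated at `b`. -/
def levelWord (P : ParamWord σ m N) (j : ℕ) (b : ℕ → σ) : List σ := P.word (P.lv j) b

theorem pos (P : ParamWord σ m N) (hm : 0 < m) : 0 < N := (Nat.zero_le _).trans_lt (P.lv_lt 0 hm)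

section Basic

variable (P : ParamWord σ m N)

theorem lv_lt_lv {r j : ℕ} (h : r < j) (hj : j < m) : P.lv r < P.lv j :=
  P.lv_strictMonoOn (h.trans hj) hj h

theorem lv_le_lv {r j : ℕ} (h : r ≤ j) (hj : j < m) : P.lv r ≤ P.lv j :=
  P.lv_strictMonoOn.monotoneOn (h.trans_lt hj) hj h

theorem lt_of_idx_of_lt_lv {q r j : ℕ} (hq : q < P.lv j) (h : P.idx q = .inr r) : r < j := by
  obtain ⟨hr, hle⟩ := P.lv_le_of_idx h
  by_contra! hjr
  exact (hle.trans_lt hq).not_ge (P.lv_le_lv hjr hr)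

theorem eval_lv {r : ℕ} (hr : r < m) (b : ℕ → σ) : P.eval b (P.lv r) = b r := by
  simp [eval, P.idx_lv r hr]

@[simp] theorem length_word (L : ℕ) (b : ℕ → σ) : (P.word L b).length = L := by simp [word]

@[simp] theorem length_levelWord (j : ℕ) (b : ℕ → σ) : (P.levelWord j b).length = P.lv j :=
  P.length_word _ b

theorem getElem?_word {L q : ℕ} (hq : q < L) (b : ℕ → σ) : (P.word L b)[q]? = P.eval b q := by
  simp [word, hq]

theorem getD_word {L r : ℕ} (hr : r < L) (b : ℕ → σ) (x : σ) :
    (P.word L b).getD r x = P.eval b r := by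
  simp [List.getD_eq_getElem?_getD, P.getElem?_word hr]

theorem eval_congr {j q : ℕ} {b b' : ℕ → σ} (hq : q < P.lv j) (h : ∀ r < j, b r = b' r) :
    P.eval b q = P.eval b' q := by
  unfold eval
  rcases hidx : P.idx q with a | r
  · rfl
  · exact h r (P.lt_of_idx_of_lt_lv hq hidx)

theorem levelWord_prefix {j j' : ℕ} {b b' : ℕ → σ} (hjj' : j ≤ j') (hj' : j' < m)
    (h : ∀ r < j, b r = b' r) : P.levelWord j b <+: P.levelWord j' b' := by
  rw [List.prefix_iff_eq_take]
  apply List.ext_getElem?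
  intro q
  by_cases hq : q < P.lv j
  · have hq' : q < P.lv j' := hq.trans_le (P.lv_le_lv hjj' hj')
    rw [List.getElem?_take_of_lt (by simpa using hq), levelWord, levelWord, P.getElem?_word hq,
      P.getElem?_word hq', P.eval_congr hq h]
  · simp [levelWord, word, hq]

theorem levelWord_congr {j : ℕ} {b b' : ℕ → σ} (h : ∀ r < j, b r = b' r) :
    P.levelWord j b = P.levelWord j b' := by
  simp only [levelWord, word]
  congr 1
  funext q
  exact P.eval_congr q.2 h

end Basic

def map (P : ParamWord σ m N) (f : σ → τ) : ParamWord τ m N where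
  idx q := (P.idx q).map f id
  lv := P.lv
  lv_lt := P.lv_lt
  lv_strictMonoOn := P.lv_strictMonoOn
  idx_lv r hr := by simp [P.idx_lv r hr]
  lv_le_of_idx {q r} h := by
    rcases hidx : P.idx q with a | r' <;> simp only [hidx, Sum.map_inl, Sum.map_inr] at h
    · cases h
    · cases h
      exact P.lv_le_of_idx hidx

theorem map_levelWord (P : ParamWord σ m N) (f : σ → τ) (j : ℕ) (b : ℕ → σ) :
    (P.levelWord j b).map f = (P.map f).levelWord j (f ∘ b) := by
  simp only [levelWord, word, List.map_ofFn]
  congr 1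
  funext q
  simp only [Function.comp, eval, map]
  rcases P.idx q with a | r <;> rfl

def comp {R D : ℕ} (Q : ParamWord σ R D) (P : ParamWord σ m R) : ParamWord σ m D where
  idx q := (Q.idx q).elim .inl P.idx
  lv := Q.lv ∘ P.lv
  lv_lt r hr := Q.lv_lt _ (P.lv_lt r hr)
  lv_strictMonoOn := Q.lv_strictMonoOn.comp P.lv_strictMonoOn fun r hr => P.lv_lt r hr
  idx_lv r hr := by simp [Q.idx_lv _ (P.lv_lt r hr), P.idx_lv r hr]
  lv_le_of_idx {q j} h := by
    rcases hQ : Q.idx q with a | r <;> simp only [hQ, Sum.elim_inl, Sum.elim_inr] at h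
    · cases h
    obtain ⟨hr, hQr⟩ := Q.lv_le_of_idx hQ
    obtain ⟨hj, hPj⟩ := P.lv_le_of_idx h
    exact ⟨hj, (Q.lv_le_lv hPj hr).trans hQr⟩

theorem word_comp {R D : ℕ} (Q : ParamWord σ R D) (P : ParamWord σ m R) (L : ℕ)
    (b : ℕ → σ) : (Q.comp P).word L b = Q.word L (P.eval b) := by
  simp only [word]
  congr 1
  funext q
  simp only [comp, eval]
  rcases Q.idx q with a | r <;> rfl

def snoc (P : ParamWord σ m N) : ParamWord σ (m + 1) (N + 1) where
  idx q := if q = N then .inr m else P.idx q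
  lv r := if r = m then N else P.lv r
  lv_lt r hr := by
    split_ifs with h
    · omega
    · exact (P.lv_lt r (by omega)).trans (Nat.lt_succ_self N)
  lv_strictMonoOn r hr r' hr' hrr' := by
    simp only [Set.mem_Iio] at hr hr'
    simp only [show r ≠ m by omega, if_false]
    split_ifs with h
    · exact P.lv_lt r (by omega)
    · exact P.lv_lt_lv hrr' (by omega)
  idx_lv r hr := by
    by_cases h : r = m
    · simp [h]
    · simp [h, (P.lv_lt r (by omega)).ne, P.idx_lv r (by omega)]
  lv_le_of_idx {q r} h := by
    by_cases hq : q = N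
    · simp only [hq, if_true, Sum.inr.injEq] at h
      simp [← h, hq]
    · simp only [hq, if_false] at h
      obtain ⟨hr, hle⟩ := P.lv_le_of_idx h
      simp [hr.ne, hle, hr.trans (Nat.lt_succ_self m)]

theorem levelWord_snoc (P : ParamWord σ m N) {j : ℕ} (hj : j < m) (b : ℕ → σ) :
    P.snoc.levelWord j b = P.levelWord j b := by
  simp only [levelWord, word, snoc, hj.ne, if_false]
  congr 1
  funext q
  simp [eval, (q.2.trans (P.lv_lt j hj)).ne]

theorem levelWord_snoc_self (P : ParamWord σ m N) (b : ℕ → σ) :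
    P.snoc.levelWord m b = P.word N b := by
  simp only [levelWord, word, snoc, if_true]
  congr 1
  funext q
  simp [eval, q.2.ne]

def ofSubspace [Nonempty σ] {R D : ℕ} (l : Combinatorics.Subspace (Fin R) σ (Fin D)) :
    ParamWord σ R D where
  idx q := if h : q < D then (l.idxFun ⟨q, h⟩).map id l.rank else .inl (Classical.arbitrary σ)
  lv := Nat.nth (· ∈ l.firstOccs)
  lv_lt r hr := by
    obtain ⟨e, he, -⟩ := l.exists_nth_eq_firstOcc hr
    exact he ▸ (l.firstOcc e).2
  lv_strictMonoOn r hr r' hr' h :=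
    Nat.nth_lt_nth_finset h (l.card_firstOccs.symm ▸ hr')
  idx_lv r hr := by
    obtain ⟨e, he, rfl⟩ := l.exists_nth_eq_firstOcc hr
    simp [he, l.idxFun_firstOcc]
  lv_le_of_idx {q r} h := by
    split_ifs at h with hq
    · rcases hidx : l.idxFun ⟨q, hq⟩ with a | e <;> simp only [hidx, Sum.map_inl, Sum.map_inr] at h
      · cases h
      · cases h
        exact ⟨l.rank_lt e, l.nth_rank e ▸ l.firstOcc_le hidx⟩

theorem word_ofSubspace [Nonempty σ] {R D : ℕ} (l : Combinatorics.Subspace (Fin R) σ (Fin D))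
    (b : ℕ → σ) :
    (ofSubspace l).word D b = List.ofFn (l (b ∘ l.rank)) := by
  simp only [word]
  congr 1
  funext q
  simp only [eval, ofSubspace, q.2, dif_pos, Combinatorics.Subspace.apply_def]
  rcases l.idxFun q with a | e <;> rfl

/-- Keeps the variables in `S`, renumbered increasingly, and turns the others into constants. -/
def restrict [Nonempty σ] {m' : ℕ} (P : ParamWord σ m' N) (S : Finset ℕ) (hS : ∀ r ∈ S, r < m')
    (hm : #S = m) : ParamWord σ m N where
  idx q := (P.idx q).elim .inl fun r =>
    if r ∈ S then .inr (Nat.count (· ∈ S) r) else .inl (Classical.arbitrary σ)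
  lv j := P.lv (Nat.nth (· ∈ S) j)
  lv_lt j hj := P.lv_lt _ (hS _ (Nat.nth_mem_finset (hm ▸ hj)))
  lv_strictMonoOn j hj j' hj' h :=
    P.lv_lt_lv (Nat.nth_lt_nth_finset h (hm ▸ hj')) (hS _ (Nat.nth_mem_finset (hm ▸ hj')))
  idx_lv j hj := by
    have hmem := Nat.nth_mem_finset (hm ▸ hj)
    simp [P.idx_lv _ (hS _ hmem), hmem, Nat.count_nth_finset (hm ▸ hj)]
  lv_le_of_idx {q j} h := by
    rcases hidx : P.idx q with a | r <;> simp only [hidx, Sum.elim_inl, Sum.elim_inr] at h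
    · cases h
    split_ifs at h with hr
    cases h
    exact ⟨hm ▸ Nat.count_lt_card_finset hr, (Nat.nth_count hr).symm ▸ (P.lv_le_of_idx hidx).2⟩

theorem levelWord_restrict [Nonempty σ] {m' : ℕ} (P : ParamWord σ m' N) (S : Finset ℕ)
    (hS : ∀ r ∈ S, r < m') (hm : #S = m) (j : ℕ) (b : ℕ → σ) :
    (P.restrict S hS hm).levelWord j b = P.levelWord (Nat.nth (· ∈ S) j)
      (fun r => if r ∈ S then b (Nat.count (· ∈ S) r) else Classical.arbitrary σ) := by
  simp only [levelWord, word]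
  congr 1
  funext q
  simp only [eval, restrict]
  rcases P.idx q with a | r
  · rfl
  · by_cases hr : r ∈ S <;> simp [hr]

def wordMap (P : ParamWord σ m N) (a₀ : σ) (w : List σ) : List σ :=
  P.levelWord w.length (w.getD · a₀)

theorem isWordEmb_wordMap (P : ParamWord σ m N) (a₀ : σ) : IsWordEmb m P.lv (P.wordMap a₀) where
  strictMonoOn := P.lv_strictMonoOn
  length_eq w := P.length_levelWord _ _
  getElem?_lv w hw r hr := by
    rw [wordMap, levelWord, P.getElem?_word (P.lv_lt_lv hr hw), P.eval_lv (hr.trans hw),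
      List.getElem?_eq_getElem hr, List.getD_eq_getElem _ _ hr]
  prefix_of_prefix {u w} hp hw := P.levelWord_prefix hp.length_le hw fun r hr => by
    rw [List.getD_eq_getElem _ _ hr, List.getD_eq_getElem _ _ (hr.trans_le hp.length_le),
      hp.getElem hr]

theorem map_levelWord_eq_wordMap {ι : Type*} (P : ParamWord (ι → σ) m N) (a₀ : σ) {j : ℕ}
    {w : ι → List σ} (hw : ∀ i, (w i).length = j) (i : ι) :
    (P.levelWord j fun r i => (w i).getD r a₀).map (· i) = (P.map (· i)).wordMap a₀ (w i) := by
  rw [map_levelWord, wordMap, hw i]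
  rfl

section Existence

variable [Finite σ] [Nonempty σ]

theorem exists_levelwise_mono (κ : Type*) [Finite κ] (m : ℕ) :
    ∃ N, ∀ C : List σ → κ, ∃ P : ParamWord σ m N, ∀ j < m, ∃ c, ∀ b, C (P.levelWord j b) = c := by
  induction m with
  | zero =>
    exact ⟨0, fun _ => ⟨⟨fun _ => .inl (Classical.arbitrary σ), id, nofun, nofun, nofun, nofun⟩,
      nofun⟩⟩
  | succ m ih =>
    -- Hales–Jewett makes the full words of an `R`-dimensional subspace `Q` monochromatic; an
    -- `m`-parameter word inside `Q`, found by induction, supplies the lower levels.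
    obtain ⟨R, hR⟩ := ih
    obtain ⟨D, hD⟩ := Combinatorics.Subspace.exists_mono_in_high_dimension_fin σ κ (Fin R)
    refine ⟨D + 1, fun C => ?_⟩
    obtain ⟨l, ctop, hl⟩ := hD fun x => C (List.ofFn x)
    set Q := ofSubspace l
    obtain ⟨P, hP⟩ := hR fun w => C (Q.levelWord w.length (w.getD · (Classical.arbitrary σ)))
    refine ⟨(Q.comp P).snoc, fun j hj => ?_⟩
    rcases Nat.lt_succ_iff_lt_or_eq.mp hj with hj | rfl
    · obtain ⟨c, hc⟩ := hP j hj
      refine ⟨c, fun b => ?_⟩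
      rw [levelWord_snoc _ hj, ← hc b, length_levelWord]
      exact congrArg C <| (Q.word_comp P _ b).trans <|
        Q.levelWord_congr fun r hr => (P.getD_word hr b _).symm
    · refine ⟨ctop, fun b => ?_⟩
      rw [levelWord_snoc_self, word_comp, word_ofSubspace, ← hl (P.eval b ∘ l.rank)]

theorem exists_mono (κ : Type*) [Finite κ] [Nonempty κ] (m : ℕ) :
    ∃ N, ∀ C : List σ → κ, ∃ P : ParamWord σ m N, ∃ c, ∀ j < m, ∀ b, C (P.levelWord j b) = c := by
  classical
  cases nonempty_fintype κ
  obtain ⟨N, hN⟩ := exists_levelwise_mono (σ := σ) κ (Fintype.card κ * m)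
  refine ⟨N, fun C => ?_⟩
  obtain ⟨P, hP⟩ := hN C
  -- `m` of the `card κ * m` levels share a colour; keep only those
  choose! col hcol using hP
  obtain ⟨c, -, hc⟩ := exists_le_card_fiber_of_mul_le_card_of_maps_to
    (s := range (Fintype.card κ * m)) (t := univ) (f := col) (n := m) (fun _ _ => mem_univ _)
    univ_nonempty (by simp)
  obtain ⟨S, hSsub, hScard⟩ := exists_subset_card_eq hc
  have hS : ∀ r ∈ S, r < Fintype.card κ * m ∧ col r = c := fun r hr => by
    simpa using hSsub hr
  refine ⟨P.restrict S (fun r hr => (hS r hr).1) hScard, c, fun j hj b => ?_⟩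
  have hmem := hS _ (Nat.nth_mem_finset (hScard ▸ hj))
  rw [levelWord_restrict, hcol _ hmem.1, hmem.2]

end Existence

end ParamWord

namespace OTree

open scoped Classical

variable {T : OTree}

theorem ht_le_ht {u v : Fin T.card} (h : T.le u v) : T.ht u ≤ T.ht v :=
  card_le_card fun z hz => by simpa using T.le_trans _ _ _ (by simpa using hz) h

theorem ht_lt_ht {u v : Fin T.card} (h : T.le u v) (hne : u ≠ v) : T.ht u < T.ht v := by
  refine card_lt_card ⟨fun z hz => by simpa using T.le_trans _ _ _ (by simpa using hz) h, ?_⟩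
  intro hsub
  have hvu : T.le v u := by simpa using hsub (by simpa using T.le_refl v)
  exact hne (T.le_antisymm _ _ h hvu)

theorem eq_of_le_of_ht_le {u v : Fin T.card} (h : T.le u v) (hh : T.ht v ≤ T.ht u) : u = v := by
  by_contra hne
  exact (ht_lt_ht h hne).not_ge hh

theorem lex_refl (v : Fin T.card) : T.lex v v := (T.lex_total v v).elim id id

theorem meet_le_left (v w : Fin T.card) : T.le (T.meet v w) v :=
  (Classical.choose_spec (T.meet_exists v w)).1

theorem meet_le_right (v w : Fin T.card) : T.le (T.meet v w) w :=
  (Classical.choose_spec (T.meet_exists v w)).2.1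

theorem le_meet {v w z : Fin T.card} (hv : T.le z v) (hw : T.le z w) : T.le z (T.meet v w) :=
  (Classical.choose_spec (T.meet_exists v w)).2.2 z hv hw

theorem meet_eq_left {v w : Fin T.card} (h : T.le v w) : T.meet v w = v :=
  T.le_antisymm _ _ (meet_le_left v w) (le_meet (T.le_refl v) h)

theorem meet_eq_right {v w : Fin T.card} (h : T.le w v) : T.meet v w = w :=
  T.le_antisymm _ _ (meet_le_right v w) (le_meet h (T.le_refl w))

theorem exists_root (h : 0 < T.card) : ∃ r, ∀ v, T.le r v := by
  obtain ⟨r, -, hr⟩ := exists_min_image univ T.ht ⟨⟨0, h⟩, mem_univ _⟩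
  refine ⟨r, fun v => ?_⟩
  rw [← eq_of_le_of_ht_le (meet_le_left r v) (hr _ (mem_univ _))]
  exact meet_le_right r v

theorem ht_root {r : Fin T.card} (hr : ∀ v, T.le r v) : T.ht r = 1 := by
  rw [ht, card_eq_one]
  exact ⟨r, by ext z; simpa using ⟨fun h => T.le_antisymm _ _ h (hr z), fun h => h ▸ T.le_refl r⟩⟩

theorem ImSucc.ht_eq {u v : Fin T.card} (h : T.ImSucc u v) : T.ht v = T.ht u + 1 := by
  obtain ⟨hle, hne, hmax⟩ := h
  have hpreds : univ.filter (T.le · v) = insert v (univ.filter (T.le · u)) := by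
    ext z
    simp only [mem_filter, mem_univ, true_and, mem_insert]
    refine ⟨fun hzv => ?_, ?_⟩
    · rcases T.pred_linear v z u hzv hle with hzu | huz
      · exact .inr hzu
      · rcases hmax z huz hzv with rfl | rfl
        · exact .inr (T.le_refl _)
        · exact .inl rfl
    · rintro (rfl | hzu)
      · exact T.le_refl _
      · exact T.le_trans _ _ _ hzu hle
  have hv : v ∉ univ.filter (T.le · u) := by
    simpa using fun hvu => hne (T.le_antisymm _ _ hle hvu)
  rw [ht, ht, hpreds, card_insert_of_notMem hv]

theorem exists_imSucc_of_one_lt_ht {v : Fin T.card} (hv : 1 < T.ht v) : ∃ u, T.ImSucc u v := by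
  set below := (univ.filter (T.le · v)).erase v
  have hbelow : below.Nonempty := by
    rw [← card_pos, card_erase_of_mem (by simpa using T.le_refl v)]
    exact Nat.sub_pos_of_lt hv
  obtain ⟨u, hu, hmax⟩ := exists_max_image below T.ht hbelow
  simp only [below, mem_erase, mem_filter, mem_univ, true_and] at hu hmax
  refine ⟨u, hu.2, hu.1, fun z huz hzv => ?_⟩
  by_cases hz : z = v
  · exact .inr hz
  · exact .inl (eq_of_le_of_ht_le huz (hmax z ⟨hz, hzv⟩)).symm

theorem not_le_of_imSucc_of_ne {u x y : Fin T.card} (hx : T.ImSucc u x) (hy : T.ImSucc u y)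
    (hxy : x ≠ y) : ¬ T.le x y := fun h =>
  hxy (eq_of_le_of_ht_le h (by rw [hx.ht_eq, hy.ht_eq]))

theorem meet_eq_of_imSucc {u x y v w : Fin T.card} (hx : T.ImSucc u x) (hy : T.ImSucc u y)
    (hxy : x ≠ y) (hv : T.le x v) (hw : T.le y w) : T.meet v w = u := by
  have hxw : ¬ T.le x w := fun hxw =>
    (T.pred_linear w x y hxw hw).elim (not_le_of_imSucc_of_ne hx hy hxy)
      (not_le_of_imSucc_of_ne hy hx hxy.symm)
  refine T.le_antisymm _ _ ?_ (le_meet (T.le_trans _ _ _ hx.1 hv) (T.le_trans _ _ _ hy.1 hw))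
  have hzv := meet_le_left v w
  have hzw := meet_le_right v w
  rcases T.pred_linear v _ x hzv hv with hzx | hxz
  · rcases T.pred_linear x _ u hzx hx.1 with hzu | huz
    · exact hzu
    · rcases hx.2.2 _ huz hzx with hz | hz
      · exact hz ▸ T.le_refl u
      · exact absurd (hz ▸ hzw) hxw
  · exact absurd (T.le_trans _ _ _ hxz hzw) hxw

theorem lex_of_imSucc {u x y v w : Fin T.card} (hx : T.ImSucc u x) (hy : T.ImSucc u y)
    (hxy : x ≠ y) (hlex : T.lex x y) (hv : T.le x v) (hw : T.le y w) : T.lex v w :=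
  T.lex_compat x y v w (not_le_of_imSucc_of_ne hx hy hxy)
    (not_le_of_imSucc_of_ne hy hx hxy.symm) hlex hv hw

instance : IsTrans (Fin T.card) T.lex := ⟨T.lex_trans⟩
instance : Std.Antisymm T.lex := ⟨T.lex_antisymm⟩
instance : Std.Total T.lex := ⟨T.lex_total⟩

def children (T : OTree) (v : Fin T.card) : List (Fin T.card) :=
  (univ.filter (T.ImSucc v)).sort T.lex

/-- The `c`-th immediate successor of `v` in lex order; junk value `v` if `c ≥ T.imCard v`. -/
def child (T : OTree) (v : Fin T.card) (c : ℕ) : Fin T.card := (T.children v).getD c v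

theorem length_children (v : Fin T.card) : (T.children v).length = T.imCard v := length_sort _

theorem mem_children {v w : Fin T.card} : w ∈ T.children v ↔ T.ImSucc v w := by simp [children]

theorem child_eq_getElem {v : Fin T.card} {c : ℕ} (hc : c < (T.children v).length) :
    T.child v c = (T.children v)[c] :=
  List.getD_eq_getElem _ _ hc

theorem imSucc_child {v : Fin T.card} {c : ℕ} (hc : c < T.imCard v) :
    T.ImSucc v (T.child v c) := by
  rw [← length_children] at hc
  rw [child_eq_getElem hc]
  exact mem_children.mp (List.getElem_mem hc)

theorem lex_child_of_lt {v : Fin T.card} {c c' : ℕ} (hcc' : c < c') (hc' : c' < T.imCard v) :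
    T.lex (T.child v c) (T.child v c') := by
  rw [← length_children] at hc'
  rw [child_eq_getElem (hcc'.trans hc'), child_eq_getElem hc']
  exact List.pairwise_iff_getElem.mp (pairwise_sort _ _) c c' _ hc' hcc'

theorem child_injOn {v : Fin T.card} {c c' : ℕ} (hc : c < T.imCard v) (hc' : c' < T.imCard v)
    (h : T.child v c = T.child v c') : c = c' := by
  rw [← length_children] at hc hc'
  rw [child_eq_getElem hc, child_eq_getElem hc'] at h
  exact (sort_nodup _ _).getElem_inj_iff.mp h

theorem exists_child_eq {v w : Fin T.card} (h : T.ImSucc v w) :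
    ∃ c < T.imCard v, T.child v c = w := by
  obtain ⟨c, hc, rfl⟩ := List.mem_iff_getElem.mp (mem_children.mpr h)
  exact ⟨c, length_children v ▸ hc, child_eq_getElem hc⟩

variable {k : ℕ}

def descend (T : OTree) (v : Fin T.card) : List (Fin k) → Fin T.card
  | [] => v
  | c :: w => T.descend (T.child v c) w

@[simp] theorem descend_cons (v : Fin T.card) (c : Fin k) (w : List (Fin k)) :
    T.descend v (c :: w) = T.descend (T.child v c) w := rfl

theorem descend_append (v : Fin T.card) (u w : List (Fin k)) :
    T.descend v (u ++ w) = T.descend (T.descend v u) w := by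
  induction u generalizing v with
  | nil => rfl
  | cons c u ih => exact ih _

end OTree

namespace Regular

open OTree
open scoped Classical

variable {T : OTree} {k n : ℕ} (hT : Regular T k n)
include hT

theorem ht_le (v : Fin T.card) : T.ht v ≤ n := by
  obtain ⟨w, hw, hmax⟩ :=
    exists_max_image (univ.filter (T.le v)) T.ht ⟨v, by simpa using T.le_refl v⟩
  simp only [mem_filter, mem_univ, true_and] at hw hmax
  have hleaf : T.Leaf w := fun z hz =>
    (eq_of_le_of_ht_le hz (hmax z (T.le_trans _ _ _ hw hz))).symm
  exact (ht_le_ht hw).trans (hT.2.1 w hleaf).le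

theorem card_pos (hn : 0 < n) : 0 < T.card :=
  Nat.pos_of_ne_zero fun h => hn.ne' (hT.2.2.mp h)

theorem imCard_eq {v : Fin T.card} (hv : T.ht v < n) : T.imCard v = k :=
  hT.1 v fun hleaf => hv.ne (hT.2.1 v hleaf)

theorem imCard_eq_of_imSucc {u v : Fin T.card} (h : T.ImSucc u v) : T.imCard u = k :=
  hT.1 u fun hleaf => h.2.1 (hleaf v h.1).symm

theorem imSucc_child {v : Fin T.card} (hv : T.ht v < n) (c : Fin k) :
    T.ImSucc v (T.child v c) :=
  OTree.imSucc_child (hT.imCard_eq hv ▸ c.2)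

theorem ht_descend {v : Fin T.card} {w : List (Fin k)} (h : T.ht v + w.length ≤ n) :
    T.ht (T.descend v w) = T.ht v + w.length := by
  induction w generalizing v with
  | nil => rfl
  | cons c w ih =>
    simp only [List.length_cons] at h
    have hc := (hT.imSucc_child (v := v) (by omega) c).ht_eq
    rw [descend_cons, ih (by omega), hc, List.length_cons]
    omega

theorem le_descend {v : Fin T.card} {w : List (Fin k)} (h : T.ht v + w.length ≤ n) :
    T.le v (T.descend v w) := by
  induction w generalizing v with
  | nil => exact T.le_refl v
  | cons c w ih =>
    simp only [List.length_cons] at h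
    have hc := hT.imSucc_child (v := v) (by omega) c
    exact T.le_trans _ _ _ hc.1 (ih (by rw [hc.ht_eq]; omega))

theorem le_descend_of_prefix {v : Fin T.card} {u w : List (Fin k)} (hp : u <+: w)
    (h : T.ht v + w.length ≤ n) : T.le (T.descend v u) (T.descend v w) := by
  obtain ⟨s, rfl⟩ := hp
  rw [descend_append]
  apply hT.le_descend
  rw [hT.ht_descend (by simp at h; omega)]
  simpa [add_assoc] using h

theorem meet_descend_cons {v : Fin T.card} {u w : List (Fin k)} {a b : Fin k}
    (hab : a ≠ b) (hu : T.ht v + (a :: u).length ≤ n) (hw : T.ht v + (b :: w).length ≤ n) :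
    T.meet (T.descend v (a :: u)) (T.descend v (b :: w)) = v := by
  simp only [List.length_cons] at hu hw
  have ha := hT.imSucc_child (v := v) (by omega) a
  have hb := hT.imSucc_child (v := v) (by omega) b
  refine meet_eq_of_imSucc ha hb (fun h => hab (Fin.ext ?_))
    (hT.le_descend (by rw [ha.ht_eq]; omega)) (hT.le_descend (by rw [hb.ht_eq]; omega))
  have hk := hT.imCard_eq (v := v) (by omega)
  exact child_injOn (hk ▸ a.2) (hk ▸ b.2) h

theorem lex_descend_cons {v : Fin T.card} {u w : List (Fin k)} {a b : Fin k}
    (hab : a < b) (hu : T.ht v + (a :: u).length ≤ n) (hw : T.ht v + (b :: w).length ≤ n) :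
    T.lex (T.descend v (a :: u)) (T.descend v (b :: w)) := by
  simp only [List.length_cons] at hu hw
  have ha := hT.imSucc_child (v := v) (by omega) a
  have hb := hT.imSucc_child (v := v) (by omega) b
  have hk := hT.imCard_eq (v := v) (by omega)
  exact lex_of_imSucc ha hb (fun h => hab.ne (Fin.ext (child_injOn (hk ▸ a.2) (hk ▸ b.2) h)))
    (lex_child_of_lt hab (hk ▸ b.2)) (hT.le_descend (by rw [ha.ht_eq]; omega))
    (hT.le_descend (by rw [hb.ht_eq]; omega))

theorem meet_descend_diverge {v : Fin T.card} {p u w : List (Fin k)} {a b : Fin k}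
    (hab : a ≠ b) (hu : T.ht v + (p ++ a :: u).length ≤ n)
    (hw : T.ht v + (p ++ b :: w).length ≤ n) :
    T.meet (T.descend v (p ++ a :: u)) (T.descend v (p ++ b :: w)) = T.descend v p := by
  simp only [List.length_append] at hu hw
  rw [descend_append, descend_append]
  exact hT.meet_descend_cons hab (by rw [hT.ht_descend (by omega)]; omega)
    (by rw [hT.ht_descend (by omega)]; omega)

theorem lex_descend_diverge {v : Fin T.card} {p u w : List (Fin k)} {a b : Fin k}
    (hab : a < b) (hu : T.ht v + (p ++ a :: u).length ≤ n)
    (hw : T.ht v + (p ++ b :: w).length ≤ n) :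
    T.lex (T.descend v (p ++ a :: u)) (T.descend v (p ++ b :: w)) := by
  simp only [List.length_append] at hu hw
  rw [descend_append, descend_append]
  exact hT.lex_descend_cons hab (by rw [hT.ht_descend (by omega)]; omega)
    (by rw [hT.ht_descend (by omega)]; omega)

theorem exists_descend_eq {r : Fin T.card} (hr : ∀ v, T.le r v) (v : Fin T.card) :
    ∃ w : List (Fin k), w.length + 1 = T.ht v ∧ T.descend r w = v := by
  induction hv : T.ht v using Nat.strong_induction_on generalizing v with
  | _ h ih =>
    subst hv
    have h1 : 1 ≤ T.ht v := ht_root hr ▸ ht_le_ht (hr v)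
    by_cases hv1 : T.ht v = 1
    · exact ⟨[], hv1.symm, show r = v from eq_of_le_of_ht_le (hr v) (by rw [ht_root hr, hv1])⟩
    obtain ⟨u, hu⟩ := exists_imSucc_of_one_lt_ht (by omega : 1 < T.ht v)
    obtain ⟨w, hw, rfl⟩ := ih (T.ht u) (by rw [hu.ht_eq]; omega) u rfl
    obtain ⟨c, hc, rfl⟩ := exists_child_eq hu
    refine ⟨w ++ [⟨c, hT.imCard_eq_of_imSucc hu ▸ hc⟩], ?_, by rw [descend_append]; rfl⟩
    rw [hu.ht_eq, ← hw, List.length_append, List.length_singleton]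

theorem exists_eq_descend_of_imSucc {v x : Fin T.card} {w : List (Fin k)}
    (h : T.ImSucc (T.descend v w) x) : ∃ c : Fin k, x = T.descend v (w ++ [c]) := by
  obtain ⟨c, hc, rfl⟩ := exists_child_eq h
  exact ⟨⟨c, hT.imCard_eq_of_imSucc h ▸ hc⟩, by rw [descend_append]; rfl⟩

theorem descend_injOn {r : Fin T.card} (hr : ∀ v, T.le r v) {u w : List (Fin k)}
    (hu : u.length < n) (hw : w.length < n) (h : T.descend r u = T.descend r w) : u = w := by
  have hht : ∀ {x : List (Fin k)}, x.length < n → T.ht (T.descend r x) = x.length + 1 :=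
    fun hx => by rw [hT.ht_descend (by rw [ht_root hr]; omega), ht_root hr, add_comm]
  have hlen : u.length = w.length := by simpa [hht hu, hht hw] using congrArg T.ht h
  rcases List.prefix_or_prefix_or_diverge u w with hp | hp | ⟨p, a, b, u', w', hab, rfl, rfl⟩
  · exact hp.eq_of_length hlen
  · exact (hp.eq_of_length hlen.symm).symm
  · have hmeet := hT.meet_descend_diverge (v := r) (p := p) (u := u') (w := w') hab
      (by rw [ht_root hr]; omega) (by rw [ht_root hr]; omega)
    rw [h, meet_eq_left (T.le_refl _)] at hmeet
    have := congrArg T.ht hmeet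
    rw [hht hw, hht (by simp at hw ⊢; omega)] at this
    simp at this

def addr {r : Fin T.card} (hr : ∀ v, T.le r v) (v : Fin T.card) : List (Fin k) :=
  (hT.exists_descend_eq hr v).choose

theorem length_addr {r : Fin T.card} (hr : ∀ v, T.le r v) (v : Fin T.card) :
    (hT.addr hr v).length + 1 = T.ht v :=
  (hT.exists_descend_eq hr v).choose_spec.1

theorem descend_addr {r : Fin T.card} (hr : ∀ v, T.le r v) (v : Fin T.card) :
    T.descend r (hT.addr hr v) = v :=
  (hT.exists_descend_eq hr v).choose_spec.2

theorem length_addr_lt {r : Fin T.card} (hr : ∀ v, T.le r v) (v : Fin T.card) :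
    (hT.addr hr v).length < n := by
  have := hT.length_addr hr v
  have := hT.ht_le v
  omega

theorem addr_descend {r : Fin T.card} (hr : ∀ v, T.le r v) {w : List (Fin k)}
    (hw : w.length < n) : hT.addr hr (T.descend r w) = w :=
  hT.descend_injOn hr (hT.length_addr_lt hr _) hw (hT.descend_addr hr _)

theorem ht_root_add_length_addr_le {r : Fin T.card} (hr : ∀ v, T.le r v) (v : Fin T.card) :
    T.ht r + (hT.addr hr v).length ≤ n := by
  rw [ht_root hr, add_comm]
  exact hT.length_addr_lt hr v

theorem le_of_addr_prefix {r : Fin T.card} (hr : ∀ v, T.le r v) {x y : Fin T.card}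
    (h : hT.addr hr x <+: hT.addr hr y) : T.le x y := by
  rw [← hT.descend_addr hr x, ← hT.descend_addr hr y]
  exact hT.le_descend_of_prefix h (hT.ht_root_add_length_addr_le hr y)

theorem meet_eq_of_addr_diverge {r : Fin T.card} (hr : ∀ v, T.le r v) {x y : Fin T.card}
    {p u w : List (Fin k)} {a b : Fin k} (hab : a ≠ b) (hx : hT.addr hr x = p ++ a :: u)
    (hy : hT.addr hr y = p ++ b :: w) : T.meet x y = T.descend r p := by
  have hbx := hT.ht_root_add_length_addr_le hr x
  have hby := hT.ht_root_add_length_addr_le hr y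
  rw [hx] at hbx
  rw [hy] at hby
  rw [← hT.descend_addr hr x, ← hT.descend_addr hr y, hx, hy]
  exact hT.meet_descend_diverge hab hbx hby

theorem lex_of_addr_diverge {r : Fin T.card} (hr : ∀ v, T.le r v) {x y : Fin T.card}
    {p u w : List (Fin k)} {a b : Fin k} (hab : a < b) (hx : hT.addr hr x = p ++ a :: u)
    (hy : hT.addr hr y = p ++ b :: w) : T.lex x y := by
  have hbx := hT.ht_root_add_length_addr_le hr x
  have hby := hT.ht_root_add_length_addr_le hr y
  rw [hx] at hbx
  rw [hy] at hby
  rw [← hT.descend_addr hr x, ← hT.descend_addr hr y, hx, hy]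
  exact hT.lex_descend_diverge hab hbx hby

end Regular

namespace IsWordEmb

open OTree

variable {k m n : ℕ} {S T : OTree} {rS : Fin S.card} {rT : Fin T.card} {ℓ : ℕ → ℕ}
  {φ : List (Fin k) → List (Fin k)}

section Descend

variable (hφ : IsWordEmb m ℓ φ) (hrT : ∀ v, T.le rT v) (hℓ : ∀ j < m, ℓ j < n)
include hφ hrT hℓ

theorem ht_root_add_length_le {w : List (Fin k)} (hw : w.length < m) :
    T.ht rT + (φ w).length ≤ n := by
  rw [ht_root hrT, hφ.length_eq, add_comm]
  exact hℓ _ hw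

variable (hT : Regular T k n)
include hT

theorem ht_descend {w : List (Fin k)} (hw : w.length < m) :
    T.ht (T.descend rT (φ w)) = ℓ w.length + 1 := by
  rw [hT.ht_descend (hφ.ht_root_add_length_le hrT hℓ hw), ht_root hrT, hφ.length_eq, add_comm]

theorem le_descend_of_prefix {u w : List (Fin k)} (hp : u <+: w) (hw : w.length < m) :
    T.le (T.descend rT (φ u)) (T.descend rT (φ w)) :=
  hT.le_descend_of_prefix (hφ.prefix_of_prefix hp hw) (hφ.ht_root_add_length_le hrT hℓ hw)

theorem meet_descend_diverge {p u w : List (Fin k)} {a b : Fin k} (hab : a ≠ b)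
    (hu : (p ++ a :: u).length < m) (hw : (p ++ b :: w).length < m) :
    T.meet (T.descend rT (φ (p ++ a :: u))) (T.descend rT (φ (p ++ b :: w))) =
      T.descend rT (φ p) := by
  have hbu := hφ.ht_root_add_length_le hrT hℓ hu
  have hbw := hφ.ht_root_add_length_le hrT hℓ hw
  obtain ⟨s, hs⟩ := hφ.exists_eq_append_cons hu
  obtain ⟨s', hs'⟩ := hφ.exists_eq_append_cons hw
  rw [hs] at hbu ⊢
  rw [hs'] at hbw ⊢
  exact hT.meet_descend_diverge hab hbu hbw

theorem lex_descend_diverge {p u w : List (Fin k)} {a b : Fin k} (hab : a < b)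
    (hu : (p ++ a :: u).length < m) (hw : (p ++ b :: w).length < m) :
    T.lex (T.descend rT (φ (p ++ a :: u))) (T.descend rT (φ (p ++ b :: w))) := by
  have hbu := hφ.ht_root_add_length_le hrT hℓ hu
  have hbw := hφ.ht_root_add_length_le hrT hℓ hw
  obtain ⟨s, hs⟩ := hφ.exists_eq_append_cons hu
  obtain ⟨s', hs'⟩ := hφ.exists_eq_append_cons hw
  rw [hs] at hbu ⊢
  rw [hs'] at hbw ⊢
  exact hT.lex_descend_diverge hab hbu hbw

end Descend

variable (hφ : IsWordEmb m ℓ φ) (hS : Regular S k m) (hT : Regular T k n)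
  (hrS : ∀ v, S.le rS v) (hrT : ∀ v, T.le rT v) (hℓ : ∀ j < m, ℓ j < n)
include hφ hS hT hrS hrT hℓ

theorem ht_descend_addr (v : Fin S.card) :
    T.ht (T.descend rT (φ (hS.addr hrS v))) = ℓ (hS.addr hrS v).length + 1 :=
  hφ.ht_descend hrT hℓ hT (hS.length_addr_lt hrS v)

theorem injective_descend_addr : Function.Injective (T.descend rT ∘ φ ∘ hS.addr hrS) := by
  intro x y h
  have hlt := fun v => hS.length_addr_lt hrS v
  have hφlt : ∀ v, (φ (hS.addr hrS v)).length < n := fun v => by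
    rw [hφ.length_eq]; exact hℓ _ (hlt v)
  rw [← hS.descend_addr hrS x, ← hS.descend_addr hrS y,
    hφ.injOn (hlt x) (hlt y) (hT.descend_injOn hrT (hφlt x) (hφlt y) h)]

theorem descend_addr_meet (x y : Fin S.card) :
    T.descend rT (φ (hS.addr hrS (S.meet x y))) =
      T.meet (T.descend rT (φ (hS.addr hrS x))) (T.descend rT (φ (hS.addr hrS y))) := by
  have hlt := fun v => hS.length_addr_lt hrS v
  rcases List.prefix_or_prefix_or_diverge (hS.addr hrS x) (hS.addr hrS y) with
    hp | hp | ⟨p, a, b, u, w, hab, hx, hy⟩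
  · rw [meet_eq_left (hS.le_of_addr_prefix hrS hp),
      meet_eq_left (hφ.le_descend_of_prefix hrT hℓ hT hp (hlt y))]
  · rw [meet_eq_right (hS.le_of_addr_prefix hrS hp),
      meet_eq_right (hφ.le_descend_of_prefix hrT hℓ hT hp (hlt x))]
  · have hpm : p.length < m := by
      have := hlt x
      rw [hx, List.length_append] at this
      omega
    rw [hS.meet_eq_of_addr_diverge hrS hab hx hy, hS.addr_descend hrS hpm, hx, hy,
      hφ.meet_descend_diverge hrT hℓ hT hab (hx ▸ hlt x) (hy ▸ hlt y)]

theorem lex_descend_addr {x y : Fin S.card} (h : S.lex x y) :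
    T.lex (T.descend rT (φ (hS.addr hrS x))) (T.descend rT (φ (hS.addr hrS y))) := by
  by_cases hxy : x = y
  · subst hxy
    exact lex_refl _
  have hlt := fun v => hS.length_addr_lt hrS v
  rcases List.prefix_or_prefix_or_diverge (hS.addr hrS x) (hS.addr hrS y) with
    hp | hp | ⟨p, a, b, u, w, hab, hx, hy⟩
  · exact T.le_lex _ _ (hφ.le_descend_of_prefix hrT hℓ hT hp (hlt y))
  · exact absurd (S.lex_antisymm _ _ h (S.le_lex _ _ (hS.le_of_addr_prefix hrS hp))) hxy
  rcases lt_or_gt_of_ne hab with hab | hba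
  · rw [hx, hy]
    exact hφ.lex_descend_diverge hrT hℓ hT hab (hx ▸ hlt x) (hy ▸ hlt y)
  · exact absurd (S.lex_antisymm _ _ h (hS.lex_of_addr_diverge hrS hba hy hx)) hxy

theorem exists_imSucc_le_descend_addr {v v' : Fin S.card} {w : Fin T.card} (hv : S.ImSucc v v')
    (hw : T.ImSucc (T.descend rT (φ (hS.addr hrS v))) w) :
    ∃ v'', S.ImSucc v v'' ∧ T.le w (T.descend rT (φ (hS.addr hrS v''))) := by
  have hvm : S.ht v < m := by
    have := hv.ht_eq
    have := hS.ht_le v'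
    omega
  obtain ⟨c, rfl⟩ := hT.exists_eq_descend_of_imSucc hw
  have hlen : (hS.addr hrS v ++ [c]).length < m := by
    have := hS.length_addr hrS v
    simp only [List.length_append, List.length_singleton]
    omega
  refine ⟨S.descend rS (hS.addr hrS v ++ [c]), ?_, ?_⟩
  · rw [descend_append, hS.descend_addr]
    exact hS.imSucc_child hvm c
  · rw [hS.addr_descend hrS hlen]
    exact hT.le_descend_of_prefix (hφ.append_singleton_prefix hlen)
      (hφ.ht_root_add_length_le hrT hℓ hlen)

theorem isEmb_descend_addr : IsEmb S T (T.descend rT ∘ φ ∘ hS.addr hrS) :=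
  ⟨hφ.injective_descend_addr hS hT hrS hrT hℓ, hφ.descend_addr_meet hS hT hrS hrT hℓ,
    fun _ _ h => hφ.lex_descend_addr hS hT hrS hrT hℓ h,
    fun _ _ _ hw _ _ ⟨_, hv, _⟩ => hφ.exists_imSucc_le_descend_addr hS hT hrS hrT hℓ hv hw⟩

theorem strong_descend_addr : Strong S T (T.descend rT ∘ φ ∘ hS.addr hrS) := by
  intro v w h
  simp only [Function.comp_apply, hφ.ht_descend_addr hS hT hrS hrT hℓ]
  have := hS.length_addr hrS v
  have := hS.length_addr hrS w
  congr 2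
  omega

end IsWordEmb

theorem isEmb_strong_of_isEmpty {S T : OTree} [IsEmpty (Fin S.card)]
    (f : Fin S.card → Fin T.card) : IsEmb S T f ∧ Strong S T f :=
  ⟨⟨fun {x} => isEmptyElim x, isEmptyElim, isEmptyElim, isEmptyElim⟩, isEmptyElim⟩

end

/-- Halpern–Läuchli theorem for strong subtrees (level product version): for `k ≥ 1`,
`d > 0`, `t ≥ 1` and `m`, there is `n` such that for any regular ordered trees `Tm`, `Tn`
with branching `k` and heights `m`, `n`, every `d`-coloring of the `t`-tuples of nodes of
`Tn` of equal height admits a strong sequence of embeddings `g₁, …, g_t : Tm → Tn` such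
that `{(g₁ v₁, …, g_t v_t) : v₁, …, v_t ∈ Tm of equal height}` is monochromatic. -/
theorem halpern_laeuchli_levels (k d t m : ℕ) (hk : 1 ≤ k) (hd : 0 < d) (ht : 1 ≤ t) :
    ∃ n : ℕ, ∀ Tm Tn : OTree, Regular Tm k m → Regular Tn k n →
      ∀ C : (Fin t → Fin Tn.card) → Fin d,
        ∃ g : Fin t → (Fin Tm.card → Fin Tn.card),
          (∀ i, IsEmb Tm Tn (g i) ∧ Strong Tm Tn (g i)) ∧
          (∀ i j x y, Tn.ht (Tn.meet (g i x) (g i y)) = Tn.ht (Tn.meet (g j x) (g j y))) ∧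
          ∃ c : Fin d, ∀ p : Fin t → Fin Tm.card, (∀ i j, Tm.ht (p i) = Tm.ht (p j)) →
            C (fun i => g i (p i)) = c := by
  have : Nonempty (Fin t → Fin k) := ⟨fun _ => ⟨0, hk⟩⟩
  have : Nonempty (Fin d) := ⟨⟨0, hd⟩⟩
  obtain ⟨N, hN⟩ := ParamWord.exists_mono (σ := Fin t → Fin k) (Fin d) m
  refine ⟨N, fun Tm Tn hTm hTn C => ?_⟩
  rcases Nat.eq_zero_or_pos m with rfl | hm
  · have : IsEmpty (Fin Tm.card) := (hTm.2.2.mpr rfl) ▸ Fin.isEmpty'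
    exact ⟨fun _ => isEmptyElim, fun _ => isEmb_strong_of_isEmpty _, fun _ _ x => isEmptyElim x,
      ⟨0, hd⟩, fun p => isEmptyElim (p ⟨0, ht⟩)⟩
  have hN0 : 0 < N := (hN fun _ => ⟨0, hd⟩).choose.pos hm
  obtain ⟨rm, hrm⟩ := OTree.exists_root (hTm.card_pos hm)
  obtain ⟨rn, hrn⟩ := OTree.exists_root (hTn.card_pos hN0)
  -- a word over `Fin t → Fin k` codes the `t`-tuple of nodes reached by its coordinate words
  obtain ⟨P, c, hP⟩ := hN fun u => C fun i => Tn.descend rn (u.map (· i))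
  have hφ : ∀ i, IsWordEmb m P.lv ((P.map (· i)).wordMap ⟨0, hk⟩) := fun i =>
    (P.map (· i)).isWordEmb_wordMap _
  refine ⟨fun i => Tn.descend rn ∘ (P.map (· i)).wordMap ⟨0, hk⟩ ∘ hTm.addr hrm,
    fun i => ⟨(hφ i).isEmb_descend_addr hTm hTn hrm hrn P.lv_lt,
      (hφ i).strong_descend_addr hTm hTn hrm hrn P.lv_lt⟩, fun i j x y => ?_, c, fun p hp => ?_⟩
  · simp only [Function.comp_apply, ← (hφ _).descend_addr_meet hTm hTn hrm hrn P.lv_lt,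
      (hφ _).ht_descend_addr hTm hTn hrm hrn P.lv_lt]
  · have hlen : ∀ i, (hTm.addr hrm (p i)).length = Tm.ht (p ⟨0, ht⟩) - 1 := fun i => by
      rw [← hp i, ← hTm.length_addr hrm (p i), Nat.add_sub_cancel]
    rw [← hP _ (hlen ⟨0, ht⟩ ▸ hTm.length_addr_lt hrm (p ⟨0, ht⟩))]
    exact congrArg C (funext fun i => congrArg _ (P.map_levelWord_eq_wordMap _ hlen i).symm)
end
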